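/- arXiv:1804.04885 — 2 statements merged into one kernel-verified Lean document; each statement's English description precedes it below -/
import Mathlib

section
/- Let n ≥ 2 be an integer, let c_1, …, c_{2n−1} and d_k = (−1)^k c_k be as defined, and let u ∈ H²(ℝ) attain its maximum over ℝ at a point ξ with M = u(ξ). Suppose u ∈ L^{2n+2}(ℝ) and u' ∈ L^{2n+2}(ℝ). Then ∫_{−∞}^{ξ} (u − u')²·( u^{2n} + Σ_{k=1}^{2n−1} c_k·u^{2n−k}·u'^k + (−1)^n·u'^{2n}/(2n+1) ) dx + ∫_{ξ}^{∞} (u + u')²·( u^{2n} + Σ_{k=1}^{2n−1} d_k·u^{2n−k}·u'^k + (−1)^n·u'^{2n}/(2n+1) ) dx = F(u) − ((2 − c_1)/(n+1))·M^{2n+2}. -/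
/-!
Write the factor of `(u - u')²` as `Σ_{k=0}^{2n} c_k a^{2n-k} b^k` with `c_0 = 1` and
`c_{2n} = (-1)^n/(2n+1)`. Every `c_k` is a combination `Σ_j w_j max(2j-1-k, 0)` of hinges with
weights `w_j = (-1)^{j+1} C(n+1,j)/(2j-1)`. Multiplication by `(a - b)²` acts on coefficient
sequences as a second difference, which annihilates a hinge except at its kink and at its two
lowest coefficients; this gives the pointwise identity
`(a - b)² h_c(a, b) = F(a, b) - (2 - c_1) a^{2n+1} b`, and `b ↦ -b` turns it into the one for the
`d_k`. After integration, the term `(2 - c_1) u^{2n+1} u' = (2 - c_1) (u^{2n+2}/(2n+2))'`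
contributes `(2 - c_1) M^{2n+2}/(2n+2)` on each half-line.
-/

open MeasureTheory Filter Finset ENNReal

/-- The coefficients `c_k`, `k = 1, …, 2n−1`, of the auxiliary function `h`:
`c₁ = 1/2 + Σ_{j=1}^{n+1} (−1)^{j+1}·((2j−3)/(2(2j−1)))·C(n+1,j)`;
`c_{2m} = Σ_{j=m+1}^{n+1} (−1)^{j+1}·((2j−2m−1)/(2j−1))·C(n+1,j)` for `m = 1,…,n−1`;
`c_{2m−1} = Σ_{j=m+1}^{n+1} (−1)^{j+1}·((2j−2m)/(2j−1))·C(n+1,j)` for `m = 2,…,n`. -/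
noncomputable def gmchC (n k : ℕ) : ℝ :=
  if k = 1 then
    1 / 2 + ∑ j ∈ Finset.Icc 1 (n + 1),
      (-1 : ℝ) ^ (j + 1) * ((2 * (j : ℝ) - 3) / (2 * (2 * (j : ℝ) - 1))) * ((n + 1).choose j : ℝ)
  else
    ∑ j ∈ Finset.Icc ((k + 1) / 2 + 1) (n + 1),
      (-1 : ℝ) ^ (j + 1) * ((2 * (j : ℝ) - ((k : ℝ) + 1)) / (2 * (j : ℝ) - 1)) *
        ((n + 1).choose j : ℝ)

/-- The coefficients `d_k = (−1)^k·c_k`, `k = 1, …, 2n−1`. -/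
noncomputable def gmchD (n k : ℕ) : ℝ := (-1 : ℝ) ^ k * gmchC n k

theorem sub_sq_mul_sum_range_succ_mul_pow_mul_pow {R : Type*} [CommRing R] (a b : R) (L : ℕ) :
    (a - b) ^ 2 * ∑ i ∈ range L, ((i : R) + 1) * a ^ i * b ^ (L - 1 - i) =
      L * a ^ (L + 1) - (L + 1) * a ^ L * b + b ^ (L + 1) := by
  induction L with
  | zero => simp
  | succ L ih =>
    have hshift : ∑ i ∈ range L, ((i : R) + 1) * a ^ i * b ^ (L + 1 - 1 - i) =
        b * ∑ i ∈ range L, ((i : R) + 1) * a ^ i * b ^ (L - 1 - i) := by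
      rw [mul_sum]
      refine sum_congr rfl fun i hi => ?_
      rw [show L + 1 - 1 - i = L - 1 - i + 1 by have := mem_range.mp hi; omega, pow_succ]
      ring
    rw [sum_range_succ, hshift, show L + 1 - 1 - L = 0 by omega]
    push_cast
    linear_combination b * ih

-- The truncated subtraction `L - k` is the hinge `max (L - k) 0`.
theorem sub_sq_mul_sum_range_natSub_mul_pow_mul_pow {R : Type*} [CommRing R] (a b : R)
    {L N : ℕ} (h : L ≤ N + 1) :
    (a - b) ^ 2 * ∑ k ∈ range (N + 1), ((L - k : ℕ) : R) * a ^ (N - k) * b ^ k =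
      L * a ^ (N + 2) - (L + 1) * a ^ (N + 1) * b + a ^ (N + 1 - L) * b ^ (L + 1) := by
  have hrestrict : ∑ k ∈ range (N + 1), ((L - k : ℕ) : R) * a ^ (N - k) * b ^ k =
      a ^ (N + 1 - L) * ∑ i ∈ range L, ((i : R) + 1) * a ^ i * b ^ (L - 1 - i) := by
    rw [← sum_subset (range_subset_range.mpr h) fun k _ hk => by
      rw [Nat.sub_eq_zero_of_le (by simp at hk; omega)]; simp, ← sum_range_reflect, mul_sum]
    refine sum_congr rfl fun i hi => ?_
    have hi : i < L := mem_range.mp hi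
    rw [show L - (L - 1 - i) = i + 1 by omega, show N - (L - 1 - i) = N + 1 - L + i by omega,
      pow_add]
    push_cast
    ring
  obtain ⟨m, hm⟩ := Nat.exists_eq_add_of_le h
  rw [hrestrict, mul_left_comm, sub_sq_mul_sum_range_succ_mul_pow_mul_pow,
    show N + 1 - L = m by omega, show N + 2 = m + (L + 1) by omega, hm]
  ring

theorem sum_Icc_neg_one_pow_succ_mul_choose (n : ℕ) :
    ∑ j ∈ Icc 1 (n + 1), (-1 : ℝ) ^ (j + 1) * ((n + 1).choose j : ℝ) = 1 := by
  have h := congrArg (Int.cast : ℤ → ℝ) (Int.alternating_sum_range_choose_of_ne n.succ_ne_zero)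
  push_cast at h
  rw [range_eq_Ico, sum_eq_sum_Ico_succ_bot (by omega), Ico_add_one_right_eq_Icc] at h
  simp only [pow_succ, mul_neg_one, neg_mul, sum_neg_distrib, pow_zero, Nat.choose_zero_right,
    Nat.cast_one, mul_one] at h ⊢
  linarith

noncomputable def gmchW (n j : ℕ) : ℝ :=
  (-1 : ℝ) ^ (j + 1) / (2 * (j : ℝ) - 1) * ((n + 1).choose j : ℝ)

theorem two_mul_cast_sub_one_ne_zero {j : ℕ} (hj : 1 ≤ j) : 2 * (j : ℝ) - 1 ≠ 0 := by
  have : (1 : ℝ) ≤ j := by exact_mod_cast hj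
  linarith

theorem sum_gmchW_mul_natSub (n k : ℕ) :
    ∑ j ∈ Icc 1 (n + 1), gmchW n j * ((2 * j - 1 - k : ℕ) : ℝ) =
      ∑ j ∈ Icc ((k + 1) / 2 + 1) (n + 1),
        (-1 : ℝ) ^ (j + 1) * ((2 * (j : ℝ) - ((k : ℝ) + 1)) / (2 * (j : ℝ) - 1)) *
          ((n + 1).choose j : ℝ) := by
  have hsub : Icc ((k + 1) / 2 + 1) (n + 1) ⊆ Icc 1 (n + 1) := Icc_subset_Icc_left (by omega)
  rw [← sum_subset hsub fun j hj hj' => ?_]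
  · refine sum_congr rfl fun j hj => ?_
    have hj' := mem_Icc.mp hj
    have hne := two_mul_cast_sub_one_ne_zero (by omega : 1 ≤ j)
    rw [Nat.cast_sub (by omega), Nat.cast_sub (by omega)]
    unfold gmchW
    push_cast
    field_simp
    ring
  · simp only [mem_Icc, not_and_or, not_le] at hj hj'
    rw [Nat.sub_eq_zero_of_le (by omega), Nat.cast_zero, mul_zero]

theorem gmchC_eq_sum_gmchW (n k : ℕ) :
    gmchC n k = ∑ j ∈ Icc 1 (n + 1), gmchW n j * ((2 * j - 1 - k : ℕ) : ℝ) := by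
  unfold gmchC
  split_ifs with hk
  · subst hk
    rw [show (1 / 2 : ℝ) = ∑ j ∈ Icc 1 (n + 1), (-1 : ℝ) ^ (j + 1) * ((n + 1).choose j : ℝ) / 2 by
      rw [← sum_div, sum_Icc_neg_one_pow_succ_mul_choose], ← sum_add_distrib]
    refine sum_congr rfl fun j hj => ?_
    have hne := two_mul_cast_sub_one_ne_zero (mem_Icc.mp hj).1
    rw [show 2 * j - 1 - 1 = 2 * j - 2 by omega, Nat.cast_sub (by simp at hj; omega)]
    unfold gmchW
    push_cast
    field_simp
    ring
  · exact (sum_gmchW_mul_natSub n k).symm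

theorem gmchC_zero (n : ℕ) : gmchC n 0 = 1 := by
  rw [gmchC_eq_sum_gmchW, ← sum_Icc_neg_one_pow_succ_mul_choose n]
  refine sum_congr rfl fun j hj => ?_
  have hne := two_mul_cast_sub_one_ne_zero (mem_Icc.mp hj).1
  rw [Nat.sub_zero, Nat.cast_sub (by simp at hj; omega)]
  unfold gmchW
  push_cast
  field_simp

theorem gmchC_two_mul (n : ℕ) : gmchC n (2 * n) = (-1 : ℝ) ^ n / (2 * (n : ℝ) + 1) := by
  rw [gmchC, if_neg (by omega), show (2 * n + 1) / 2 + 1 = n + 1 by omega, Icc_self,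
    sum_singleton, Nat.choose_self]
  push_cast
  rw [show 2 * ((n : ℝ) + 1) - (2 * n + 1) = 1 by ring,
    show 2 * ((n : ℝ) + 1) - 1 = 2 * n + 1 by ring]
  ring

noncomputable def gmchH (c : ℕ → ℝ) (n : ℕ) (a b : ℝ) : ℝ :=
  a ^ (2 * n) + (∑ k ∈ Icc 1 (2 * n - 1), c k * a ^ (2 * n - k) * b ^ k) +
    (-1 : ℝ) ^ n * b ^ (2 * n) / (2 * (n : ℝ) + 1)

noncomputable def gmchF (n : ℕ) (a b : ℝ) : ℝ :=
  a ^ (2 * n + 2) + (∑ k ∈ Icc 1 n, gmchW n k * a ^ (2 * n - 2 * k + 2) * b ^ (2 * k)) +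
    (-1 : ℝ) ^ n * b ^ (2 * n + 2) / (2 * (n : ℝ) + 1)

theorem sum_range_succ_eq_add_sum_Icc_add {M : Type*} [AddCommMonoid M] (f : ℕ → M) {N : ℕ}
    (hN : 1 ≤ N) : ∑ k ∈ range (N + 1), f k = f 0 + ∑ k ∈ Icc 1 (N - 1), f k + f N := by
  rw [sum_range_succ, range_eq_Ico, sum_eq_sum_Ico_succ_bot (by omega),
    ← Ico_add_one_right_eq_Icc, Nat.sub_add_cancel hN]

theorem gmchH_gmchC_eq_sum_range {n : ℕ} (hn : 1 ≤ n) (a b : ℝ) :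
    gmchH (gmchC n) n a b = ∑ k ∈ range (2 * n + 1), gmchC n k * a ^ (2 * n - k) * b ^ k := by
  rw [sum_range_succ_eq_add_sum_Icc_add _ (by omega), gmchC_zero, gmchC_two_mul, gmchH]
  simp only [Nat.sub_zero, Nat.sub_self, pow_zero]
  ring

theorem gmchF_eq_add_sum_Icc (n : ℕ) (a b : ℝ) :
    gmchF n a b = a ^ (2 * n + 2) +
      ∑ j ∈ Icc 1 (n + 1), gmchW n j * (a ^ (2 * (n + 1 - j)) * b ^ (2 * j)) := by
  rw [gmchF, sum_Icc_succ_top (by omega), Nat.sub_self]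
  have hW : gmchW n (n + 1) = (-1 : ℝ) ^ n / (2 * (n : ℝ) + 1) := by
    rw [gmchW, Nat.choose_self, pow_succ]
    push_cast
    ring
  have hbody : ∑ j ∈ Icc 1 n, gmchW n j * a ^ (2 * n - 2 * j + 2) * b ^ (2 * j) =
      ∑ j ∈ Icc 1 n, gmchW n j * (a ^ (2 * (n + 1 - j)) * b ^ (2 * j)) :=
    sum_congr rfl fun j hj => by
      rw [show 2 * n - 2 * j + 2 = 2 * (n + 1 - j) by simp at hj; omega, mul_assoc]
  rw [hW, hbody]
  ring

theorem sub_sq_mul_gmchH_gmchC {n : ℕ} (hn : 1 ≤ n) (a b : ℝ) :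
    (a - b) ^ 2 * gmchH (gmchC n) n a b =
      gmchF n a b - (2 - gmchC n 1) * (a ^ (2 * n + 1) * b) := by
  have hexpand : gmchH (gmchC n) n a b = ∑ j ∈ Icc 1 (n + 1), gmchW n j *
      ∑ k ∈ range (2 * n + 1), ((2 * j - 1 - k : ℕ) : ℝ) * a ^ (2 * n - k) * b ^ k := by
    simp_rw [gmchH_gmchC_eq_sum_range hn, gmchC_eq_sum_gmchW, sum_mul, mul_sum]
    rw [sum_comm]
    exact sum_congr rfl fun _ _ => sum_congr rfl fun _ _ => by ring
  have hhinge : ∀ j ∈ Icc 1 (n + 1), (a - b) ^ 2 * (gmchW n j *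
      ∑ k ∈ range (2 * n + 1), ((2 * j - 1 - k : ℕ) : ℝ) * a ^ (2 * n - k) * b ^ k) =
      gmchW n j * ((2 * j - 1 - 0 : ℕ) : ℝ) * a ^ (2 * n + 2) -
        gmchW n j * (2 * ((2 * j - 1 - 0 : ℕ) : ℝ) - ((2 * j - 1 - 1 : ℕ) : ℝ)) *
          (a ^ (2 * n + 1) * b) +
        gmchW n j * (a ^ (2 * (n + 1 - j)) * b ^ (2 * j)) := by
    intro j hj
    have hj := mem_Icc.mp hj
    rw [mul_left_comm,
      sub_sq_mul_sum_range_natSub_mul_pow_mul_pow a b (by omega : 2 * j - 1 ≤ 2 * n + 1),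
      Nat.sub_zero, Nat.cast_sub (by omega : 1 ≤ 2 * j - 1),
      show 2 * n + 1 - (2 * j - 1) = 2 * (n + 1 - j) by omega,
      show 2 * j - 1 + 1 = 2 * j by omega]
    push_cast
    ring
  have hcoeff : ∑ j ∈ Icc 1 (n + 1), gmchW n j *
      (2 * ((2 * j - 1 - 0 : ℕ) : ℝ) - ((2 * j - 1 - 1 : ℕ) : ℝ)) = 2 * gmchC n 0 - gmchC n 1 := by
    rw [gmchC_eq_sum_gmchW, gmchC_eq_sum_gmchW, mul_sum, ← sum_sub_distrib]
    exact sum_congr rfl fun _ _ => by ring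
  rw [hexpand, mul_sum, sum_congr rfl hhinge, sum_add_distrib, sum_sub_distrib, ← sum_mul,
    ← sum_mul, hcoeff, ← gmchC_eq_sum_gmchW, gmchC_zero, gmchF_eq_add_sum_Icc]
  ring

theorem gmchH_gmchD (n : ℕ) (a b : ℝ) : gmchH (gmchD n) n a b = gmchH (gmchC n) n a (-b) := by
  unfold gmchH gmchD
  rw [(even_two_mul n).neg_pow]
  congr 2
  exact sum_congr rfl fun k _ => by rw [neg_pow]; ring

theorem gmchF_neg_right (n : ℕ) (a b : ℝ) : gmchF n a (-b) = gmchF n a b := by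
  simp [gmchF, Even.neg_pow, parity_simps]

theorem add_sq_mul_gmchH_gmchD {n : ℕ} (hn : 1 ≤ n) (a b : ℝ) :
    (a + b) ^ 2 * gmchH (gmchD n) n a b =
      gmchF n a b + (2 - gmchC n 1) * (a ^ (2 * n + 1) * b) := by
  rw [gmchH_gmchD, ← sub_neg_eq_add, sub_sq_mul_gmchH_gmchC hn, gmchF_neg_right]
  ring

theorem integral_Iic_sub_add_integral_Ici_add {f g g' : ℝ → ℝ} (c ξ : ℝ) (hf : Integrable f)
    (hderiv : ∀ x, HasDerivAt g (g' x) x) (hg' : Integrable g')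
    (hbot : Tendsto g atBot (nhds 0)) (htop : Tendsto g atTop (nhds 0)) :
    (∫ x in Set.Iic ξ, f x - c * g' x) + ∫ x in Set.Ici ξ, f x + c * g' x =
      (∫ x, f x) - 2 * c * g ξ := by
  have hIic : ∫ x in Set.Iic ξ, g' x = g ξ := by
    simpa using integral_Iic_of_hasDerivAt_of_tendsto' (fun x _ => hderiv x) hg'.integrableOn hbot
  have hIoi : ∫ x in Set.Ioi ξ, g' x = -g ξ := by
    simpa using integral_Ioi_of_hasDerivAt_of_tendsto' (fun x _ => hderiv x) hg'.integrableOn htop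
  have hsplit := integral_add_compl (measurableSet_Iic (a := ξ)) hf
  rw [Set.compl_Iic] at hsplit
  rw [integral_Ici_eq_integral_Ioi, integral_sub hf.integrableOn (hg'.integrableOn.const_mul c),
    integral_add hf.integrableOn (hg'.integrableOn.const_mul c), integral_const_mul,
    integral_const_mul, hIic, hIoi]
  linarith

theorem abs_pow_mul_pow_le_add_pow {R : Type*} [CommRing R] [LinearOrder R]
    [IsStrictOrderedRing R] (x y : R) {p q N : ℕ} (h : p + q = N) :
    |x ^ p * y ^ q| ≤ |x| ^ N + |y| ^ N := by
  rw [abs_mul, abs_pow, abs_pow, ← h, pow_add, pow_add]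
  rcases le_total |x| |y| with hle | hle
  · calc |x| ^ p * |y| ^ q ≤ |y| ^ p * |y| ^ q := by gcongr
      _ ≤ |x| ^ p * |x| ^ q + |y| ^ p * |y| ^ q := le_add_of_nonneg_left (by positivity)
  · calc |x| ^ p * |y| ^ q ≤ |x| ^ p * |x| ^ q := by gcongr
      _ ≤ |x| ^ p * |x| ^ q + |y| ^ p * |y| ^ q := le_add_of_nonneg_right (by positivity)

theorem MeasureTheory.MemLp.integrable_pow_mul_pow {α : Type*} [MeasurableSpace α]
    {μ : Measure α} {u v : α → ℝ} {N : ℕ} (hN : N ≠ 0) (hu : MemLp u N μ) (hv : MemLp v N μ)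
    {p q : ℕ} (h : p + q = N) : Integrable (fun x => u x ^ p * v x ^ q) μ := by
  refine ((hu.integrable_norm_pow hN).add (hv.integrable_norm_pow hN)).mono'
    ((hu.1.pow p).mul (hv.1.pow q)) (Eventually.of_forall fun x => ?_)
  simpa only [Real.norm_eq_abs, Pi.add_apply] using abs_pow_mul_pow_le_add_pow (u x) (v x) h

theorem integrable_gmchF {α : Type*} [MeasurableSpace α] {μ : Measure α} {u v : α → ℝ} (n : ℕ)
    (hu : MemLp u (2 * n + 2 : ℕ) μ) (hv : MemLp v (2 * n + 2 : ℕ) μ) :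
    Integrable (fun x => gmchF n (u x) (v x)) μ := by
  have hterm {p q : ℕ} (h : p + q = 2 * n + 2) := hu.integrable_pow_mul_pow (by omega) hv h
  unfold gmchF
  refine (Integrable.add ?_ (integrable_finsetSum _ fun k hk => ?_)).add ?_
  · simpa using hterm (p := 2 * n + 2) (q := 0) rfl
  · simp_rw [mul_assoc]
    exact (hterm (by simp at hk; omega)).const_mul _
  · have hv_pow : Integrable (fun x => v x ^ (2 * n + 2)) μ := by
      simpa using hterm (p := 0) (q := 2 * n + 2) (zero_add _)
    simp_rw [mul_div_right_comm _ (_ ^ (2 * n + 2))]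
    exact hv_pow.const_mul _

theorem stmt9_general (n : ℕ) (hn : 2 ≤ n) (u u' : ℝ → ℝ)
    (hderiv : ∀ x, HasDerivAt u (u' x) x)
    (hu_top : Tendsto u atTop (nhds 0)) (hu_bot : Tendsto u atBot (nhds 0))
    (hu_mem' : MemLp u ((2 * n + 2 : ℕ) : ℝ≥0∞) (volume : Measure ℝ))
    (hu'_mem' : MemLp u' ((2 * n + 2 : ℕ) : ℝ≥0∞) (volume : Measure ℝ))
    (ξ M : ℝ) (hM : M = u ξ) :
    (∫ x in Set.Iic ξ,
        (u x - u' x) ^ 2 *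
          ((u x) ^ (2 * n) +
            (∑ k ∈ Finset.Icc 1 (2 * n - 1), gmchC n k * (u x) ^ (2 * n - k) * (u' x) ^ k) +
            (-1 : ℝ) ^ n * (u' x) ^ (2 * n) / (2 * (n : ℝ) + 1))) +
      (∫ x in Set.Ici ξ,
        (u x + u' x) ^ 2 *
          ((u x) ^ (2 * n) +
            (∑ k ∈ Finset.Icc 1 (2 * n - 1), gmchD n k * (u x) ^ (2 * n - k) * (u' x) ^ k) +
            (-1 : ℝ) ^ n * (u' x) ^ (2 * n) / (2 * (n : ℝ) + 1))) =
      (∫ x : ℝ,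
        ((u x) ^ (2 * n + 2) +
          (∑ k ∈ Finset.Icc 1 n,
            (-1 : ℝ) ^ (k + 1) / (2 * (k : ℝ) - 1) * ((n + 1).choose k : ℝ) *
              (u x) ^ (2 * n - 2 * k + 2) * (u' x) ^ (2 * k)) +
          (-1 : ℝ) ^ n * (u' x) ^ (2 * n + 2) / (2 * (n : ℝ) + 1))) -
        ((2 - gmchC n 1) / ((n : ℝ) + 1)) * M ^ (2 * n + 2) := by
  change (∫ x in Set.Iic ξ, (u x - u' x) ^ 2 * gmchH (gmchC n) n (u x) (u' x)) +
      (∫ x in Set.Ici ξ, (u x + u' x) ^ 2 * gmchH (gmchD n) n (u x) (u' x)) =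
      (∫ x, gmchF n (u x) (u' x)) - (2 - gmchC n 1) / (n + 1) * M ^ (2 * n + 2)
  have hn1 : 1 ≤ n := by omega
  simp_rw [sub_sq_mul_gmchH_gmchC hn1, add_sq_mul_gmchH_gmchD hn1]
  have hprim (x : ℝ) : HasDerivAt (fun y => u y ^ (2 * n + 2) / (2 * n + 2))
      (u x ^ (2 * n + 1) * u' x) x := by
    refine (((hderiv x).pow (2 * n + 2)).div_const (2 * n + 2)).congr_deriv ?_
    rw [show 2 * n + 2 - 1 = 2 * n + 1 by omega]
    push_cast
    field_simp
  have hlim {l : Filter ℝ} (h : Tendsto u l (nhds 0)) :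
      Tendsto (fun y => u y ^ (2 * n + 2) / (2 * n + 2)) l (nhds 0) := by
    simpa using (h.pow (2 * n + 2)).div_const ((2 * n + 2 : ℝ))
  have hint : Integrable (fun x => u x ^ (2 * n + 1) * u' x) := by
    simpa using hu_mem'.integrable_pow_mul_pow (by omega) hu'_mem' (p := 2 * n + 1) (q := 1) rfl
  rw [integral_Iic_sub_add_integral_Ici_add _ ξ (integrable_gmchF n hu_mem' hu'_mem') hprim hint
    (hlim hu_bot) (hlim hu_top), hM]
  field_simp

/-- the key identity (3.8). Let `n ≥ 2`, let `c_k`, `d_k = (−1)^k c_k` be as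
defined, and let `u ∈ H²(ℝ)` (with derivative `u'`) attain its maximum over `ℝ` at `ξ`, with
`M = u(ξ)`; suppose moreover `u, u' ∈ L^{2n+2}(ℝ)`. Then
`∫_{−∞}^{ξ} (u − u')²·(u^{2n} + Σ_{k=1}^{2n−1} c_k·u^{2n−k}·u'^k + (−1)^n·u'^{2n}/(2n+1)) dx
  + ∫_{ξ}^{∞} (u + u')²·(u^{2n} + Σ_{k=1}^{2n−1} d_k·u^{2n−k}·u'^k + (−1)^n·u'^{2n}/(2n+1)) dx
  = F(u) − ((2 − c₁)/(n+1))·M^{2n+2}`. -/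
theorem stmt9 (n : ℕ) (hn : 2 ≤ n) (u u' : ℝ → ℝ)
    (hderiv : ∀ x, HasDerivAt u (u' x) x)
    (hu'_cont : Continuous u')
    (hu_mem : MemLp u 2 (volume : Measure ℝ))
    (hu'_mem : MemLp u' 2 (volume : Measure ℝ))
    (hu_top : Tendsto u atTop (nhds 0)) (hu_bot : Tendsto u atBot (nhds 0))
    (hu'_top : Tendsto u' atTop (nhds 0)) (hu'_bot : Tendsto u' atBot (nhds 0))
    (hu_mem' : MemLp u ((2 * n + 2 : ℕ) : ℝ≥0∞) (volume : Measure ℝ))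
    (hu'_mem' : MemLp u' ((2 * n + 2 : ℕ) : ℝ≥0∞) (volume : Measure ℝ))
    (ξ M : ℝ) (hmax : ∀ x, u x ≤ u ξ) (hM : M = u ξ) :
    (∫ x in Set.Iic ξ,
        (u x - u' x) ^ 2 *
          ((u x) ^ (2 * n) +
            (∑ k ∈ Finset.Icc 1 (2 * n - 1), gmchC n k * (u x) ^ (2 * n - k) * (u' x) ^ k) +
            (-1 : ℝ) ^ n * (u' x) ^ (2 * n) / (2 * (n : ℝ) + 1))) +
      (∫ x in Set.Ici ξ,
        (u x + u' x) ^ 2 *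
          ((u x) ^ (2 * n) +
            (∑ k ∈ Finset.Icc 1 (2 * n - 1), gmchD n k * (u x) ^ (2 * n - k) * (u' x) ^ k) +
            (-1 : ℝ) ^ n * (u' x) ^ (2 * n) / (2 * (n : ℝ) + 1))) =
      (∫ x : ℝ,
        ((u x) ^ (2 * n + 2) +
          (∑ k ∈ Finset.Icc 1 n,
            (-1 : ℝ) ^ (k + 1) / (2 * (k : ℝ) - 1) * ((n + 1).choose k : ℝ) *
              (u x) ^ (2 * n - 2 * k + 2) * (u' x) ^ (2 * k)) +
          (-1 : ℝ) ^ n * (u' x) ^ (2 * n + 2) / (2 * (n : ℝ) + 1))) -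
        ((2 - gmchC n 1) / ((n : ℝ) + 1)) * M ^ (2 * n + 2) :=
  stmt9_general n hn u u' hderiv hu_top hu_bot hu_mem' hu'_mem' ξ M hM
end

section
/- Let n ≥ 2 be an integer, a > 0, R > 0, and let φ_c(x) = a·e^{−|x|} with weak derivative φ_c'(x) = −sign(x)·a·e^{−|x|}. Then there exists a constant A > 0, depending only on n, a and R, such that for every u ∈ H²(ℝ) with ‖u‖_{H²(ℝ)} ≤ R and every ε with 0 < ε < (3 − 2√2)·a: if ∫_ℝ ( (u − φ_c)² + (u' − φ_c')² ) dx ≤ ε², then |F(u) − F(φ_c)| ≤ A·ε. -/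
/-!
The density of `F` is a homogeneous polynomial of degree `n + 1` in `(u², u'²)`, hence Lipschitz
in these squares on every box `u², u'² ≤ M`, with a constant depending only on `n` and `M`.
The one-dimensional Sobolev embedding `v(x)² ≤ ∫ (v² + v'²)`, applied to `u` and to `u'`, puts
`u, u'` in the box with `M = max(1, R², a²)`, and `φ_c, φ_c'` lie in it too. Pointwise
`|u² - φ²| = |u - φ| |u + φ| ≤ (u - φ)² / (2ε) + ε (u² + φ²)`, so integrating bounds
`|F(u) - F(φ_c)|` by a constant times `ε / 2 + ε (R² + ‖φ_c‖²_{H¹})`.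
-/

open MeasureTheory Finset Filter

-- The leading and trailing terms of `F` are the cases `k = 0` and `k = n + 1` of the middle sum.
noncomputable def energyDensity (n : ℕ) (α β : ℝ) : ℝ :=
  ∑ k ∈ range (n + 2), (-1 : ℝ) ^ (k + 1) / (2 * k - 1) * (n + 1).choose k *
    (α ^ 2) ^ (n + 1 - k) * (β ^ 2) ^ k

lemma energyDensity_eq (n : ℕ) (α β : ℝ) :
    α ^ (2 * n + 2) +
      (∑ k ∈ Finset.Icc 1 n,
        (-1 : ℝ) ^ (k + 1) / (2 * (k : ℝ) - 1) * ((n + 1).choose k : ℝ) *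
          α ^ (2 * n - 2 * k + 2) * β ^ (2 * k)) +
      (-1 : ℝ) ^ n * β ^ (2 * n + 2) / (2 * (n : ℝ) + 1) = energyDensity n α β := by
  rw [energyDensity, sum_range_succ, sum_range_succ', ← Ico_add_one_right_eq_Icc,
    sum_Ico_eq_sum_range, add_comm (∑ k ∈ range n, _)]
  simp only [Nat.add_sub_cancel, Nat.sub_self, Nat.choose_self, Nat.choose_zero_right, Nat.sub_zero]
  congr 2
  · norm_num; ring
  · refine sum_congr rfl fun k hk => ?_
    rw [mem_range] at hk
    rw [← pow_mul, ← pow_mul, add_comm 1 k,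
      show 2 * (n + 1 - (k + 1)) = 2 * n - 2 * (k + 1) + 2 by omega]
  · push_cast; ring

lemma energyDensity_zero (n : ℕ) : energyDensity n 0 0 = 0 :=
  sum_eq_zero fun k _ => by rcases k with _ | k <;> simp

lemma abs_pow_sub_pow_le_of_abs_le {M x y : ℝ} (hM : 1 ≤ M) (hx : |x| ≤ M) (hy : |y| ≤ M)
    (m : ℕ) : |x ^ m - y ^ m| ≤ m * M ^ m * |x - y| :=
  calc |x ^ m - y ^ m| ≤ |x - y| * m * max |x| |y| ^ (m - 1) := abs_pow_sub_pow_le ..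
    _ ≤ |x - y| * m * M ^ m := by
      gcongr
      exact (pow_le_pow_left₀ (by positivity) (max_le hx hy) _).trans
        (pow_le_pow_right₀ hM (Nat.sub_le m 1))
    _ = m * M ^ m * |x - y| := by ring

lemma abs_pow_mul_pow_sub_le {M s t s' t' : ℝ} (hM : 1 ≤ M) (hs : |s| ≤ M) (ht : |t| ≤ M)
    (hs' : |s'| ≤ M) (ht' : |t'| ≤ M) (i j : ℕ) :
    |s ^ i * t ^ j - s' ^ i * t' ^ j| ≤ (i + j : ℕ) * M ^ (i + j) * (|s - s'| + |t - t'|) := by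
  have hMij : 0 ≤ M ^ i * M ^ j := by positivity
  calc |s ^ i * t ^ j - s' ^ i * t' ^ j|
      = |(s ^ i - s' ^ i) * t ^ j + s' ^ i * (t ^ j - t' ^ j)| := by ring_nf
    _ ≤ |s ^ i - s' ^ i| * |t| ^ j + |s'| ^ i * |t ^ j - t' ^ j| := by
      rw [← abs_pow, ← abs_pow, ← abs_mul, ← abs_mul]; exact abs_add_le _ _
    _ ≤ i * M ^ i * |s - s'| * M ^ j + M ^ i * (j * M ^ j * |t - t'|) := by
      gcongr
      · exact abs_pow_sub_pow_le_of_abs_le hM hs hs' i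
      · exact abs_pow_sub_pow_le_of_abs_le hM ht ht' j
    _ ≤ (i + j : ℕ) * M ^ (i + j) * (|s - s'| + |t - t'|) := by
      rw [pow_add]; push_cast
      nlinarith [mul_nonneg hMij (abs_nonneg (s - s')), mul_nonneg hMij (abs_nonneg (t - t'))]

lemma abs_neg_one_pow_div_le_one (k : ℕ) : |(-1 : ℝ) ^ (k + 1) / (2 * k - 1)| ≤ 1 := by
  rw [abs_div, abs_pow, abs_neg, abs_one, one_pow]
  rcases k with _ | k
  · norm_num
  · have hk : (1 : ℝ) ≤ 2 * ((k + 1 : ℕ) : ℝ) - 1 := by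
      push_cast; linarith [k.cast_nonneg (α := ℝ)]
    exact div_le_one_of_le₀ (by rwa [abs_of_pos (by linarith)]) (abs_nonneg _)

lemma abs_energyDensity_sub_le {M α β γ δ : ℝ} (hM : 1 ≤ M) (hα : α ^ 2 ≤ M) (hβ : β ^ 2 ≤ M)
    (hγ : γ ^ 2 ≤ M) (hδ : δ ^ 2 ≤ M) (n : ℕ) :
    |energyDensity n α β - energyDensity n γ δ| ≤
      2 ^ (n + 1) * (n + 1) * M ^ (n + 1) * (|α ^ 2 - γ ^ 2| + |β ^ 2 - δ ^ 2|) := by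
  have hsq : ∀ {x : ℝ}, x ^ 2 ≤ M → |x ^ 2| ≤ M := fun h => by rwa [abs_sq]
  rw [energyDensity, energyDensity, ← sum_sub_distrib]
  refine (abs_sum_le_sum_abs _ _).trans ?_
  calc ∑ k ∈ range (n + 2), |_ - _|
      ≤ ∑ k ∈ range (n + 2), ((n + 1).choose k : ℝ) *
          ((n + 1) * M ^ (n + 1) * (|α ^ 2 - γ ^ 2| + |β ^ 2 - δ ^ 2|)) := by
        refine sum_le_sum fun k hk => ?_
        have hk : k ≤ n + 1 := Nat.lt_succ_iff.mp (mem_range.mp hk)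
        have hmon := abs_pow_mul_pow_sub_le hM (hsq hα) (hsq hβ) (hsq hγ) (hsq hδ) (n + 1 - k) k
        rw [Nat.sub_add_cancel hk] at hmon
        push_cast at hmon
        rw [mul_assoc _ ((α ^ 2) ^ _), mul_assoc _ ((γ ^ 2) ^ _), ← mul_sub, abs_mul, abs_mul]
        gcongr
        · rw [Nat.abs_cast]
          exact mul_le_of_le_one_left (by positivity) (abs_neg_one_pow_div_le_one k)
    _ = 2 ^ (n + 1) * (n + 1) * M ^ (n + 1) * (|α ^ 2 - γ ^ 2| + |β ^ 2 - δ ^ 2|) := by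
        rw [← sum_mul, ← Nat.cast_sum, Nat.sum_range_choose]; push_cast; ring

lemma abs_energyDensity_le {M α β : ℝ} (hM : 1 ≤ M) (hα : α ^ 2 ≤ M) (hβ : β ^ 2 ≤ M) (n : ℕ) :
    |energyDensity n α β| ≤ 2 ^ (n + 1) * (n + 1) * M ^ (n + 1) * (α ^ 2 + β ^ 2) := by
  have h0 : (0 : ℝ) ^ 2 ≤ M := by linarith
  simpa [energyDensity_zero] using abs_energyDensity_sub_le hM hα hβ h0 h0 n

lemma continuous_energyDensity (n : ℕ) : Continuous (Function.uncurry (energyDensity n)) := by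
  unfold energyDensity Function.uncurry; fun_prop

lemma abs_sq_sub_sq_le {ε : ℝ} (hε : 0 < ε) (x y : ℝ) :
    |x ^ 2 - y ^ 2| ≤ (x - y) ^ 2 / (2 * ε) + ε * (x ^ 2 + y ^ 2) := by
  rw [div_add' _ _ _ (by positivity), le_div_iff₀ (by positivity), sq_sub_sq, abs_mul]
  nlinarith [sq_nonneg (|x - y| - ε * |x + y|), sq_abs (x - y), sq_abs (x + y),
    mul_nonneg (sq_nonneg ε) (sq_nonneg (x - y))]

lemma sq_le_integral_sq_add_sq {v w : ℝ → ℝ} (hd : ∀ x, HasDerivAt v (w x) x)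
    (hv : MemLp v 2 volume) (hw : MemLp w 2 volume) (x : ℝ) :
    v x ^ 2 ≤ ∫ y, (v y ^ 2 + w y ^ 2) := by
  have hsum : Integrable fun y => v y ^ 2 + w y ^ 2 := hv.integrable_sq.add hw.integrable_sq
  have hprod : Integrable fun y => 2 * (v y * w y) := (hv.integrable_mul hw).const_mul 2
  have hderiv : ∀ y, HasDerivAt (fun t => v t ^ 2) (2 * (v y * w y)) y := fun y =>
    ((hd y).pow 2).congr_deriv (by ring)
  have hlim : Tendsto (fun t => v t ^ 2) atTop (nhds 0) :=
    tendsto_zero_of_hasDerivAt_of_integrableOn_Ioi (a := x) (fun y _ => hderiv y)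
      hprod.integrableOn hv.integrable_sq.integrableOn
  have hftc : ∫ y in Set.Ioi x, 2 * (v y * w y) = 0 - v x ^ 2 :=
    integral_Ioi_of_hasDerivAt_of_tendsto (hderiv x).continuousAt.continuousWithinAt
      (fun y _ => hderiv y) hprod.integrableOn hlim
  calc v x ^ 2 = ∫ y in Set.Ioi x, -(2 * (v y * w y)) := by rw [integral_neg, hftc]; ring
    _ ≤ ∫ y in Set.Ioi x, (v y ^ 2 + w y ^ 2) :=
      setIntegral_mono hprod.integrableOn.neg hsum.integrableOn
        fun y => by nlinarith [sq_nonneg (v y + w y)]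
    _ ≤ ∫ y, (v y ^ 2 + w y ^ 2) :=
      setIntegral_le_integral hsum (ae_of_all _ fun y => by positivity)

lemma integral_sq_add_sq_le_integral {v w z : ℝ → ℝ} (hv : MemLp v 2 volume)
    (hw : MemLp w 2 volume) (hz : MemLp z 2 volume) :
    ∫ y, (v y ^ 2 + w y ^ 2) ≤ ∫ y, (v y ^ 2 + w y ^ 2 + z y ^ 2) :=
  integral_mono (hv.integrable_sq.add hw.integrable_sq)
    ((hv.integrable_sq.add hw.integrable_sq).add hz.integrable_sq)
    fun y => le_add_of_nonneg_right (sq_nonneg (z y))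

lemma sq_le_integral_sq_add_sq_add_sq {u u' u'' : ℝ → ℝ} (hu : ∀ x, HasDerivAt u (u' x) x)
    (hu' : ∀ x, HasDerivAt u' (u'' x) x) (h2 : MemLp u 2 volume) (h2' : MemLp u' 2 volume)
    (h2'' : MemLp u'' 2 volume) :
    (∀ x, u x ^ 2 ≤ ∫ y, (u y ^ 2 + u' y ^ 2 + u'' y ^ 2)) ∧
      ∀ x, u' x ^ 2 ≤ ∫ y, (u y ^ 2 + u' y ^ 2 + u'' y ^ 2) :=
  ⟨fun x => (sq_le_integral_sq_add_sq hu h2 h2' x).trans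
      (integral_sq_add_sq_le_integral h2 h2' h2''),
    fun x => (sq_le_integral_sq_add_sq hu' h2' h2'' x).trans <|
      integral_mono (h2'.integrable_sq.add h2''.integrable_sq)
        ((h2.integrable_sq.add h2'.integrable_sq).add h2''.integrable_sq)
        fun y => by linarith [sq_nonneg (u y)]⟩

lemma integrable_energyDensity {M : ℝ} (hM : 1 ≤ M) {f g : ℝ → ℝ} (hf : MemLp f 2 volume)
    (hg : MemLp g 2 volume) (hfM : ∀ x, f x ^ 2 ≤ M) (hgM : ∀ x, g x ^ 2 ≤ M) (n : ℕ) :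
    Integrable fun x => energyDensity n (f x) (g x) :=
  ((hf.integrable_sq.add hg.integrable_sq).const_mul _).mono'
    ((continuous_energyDensity n).comp_aestronglyMeasurable₂ hf.1 hg.1)
    (ae_of_all _ fun x => abs_energyDensity_le hM (hfM x) (hgM x) n)

lemma abs_integral_energyDensity_sub_le {M ε B C : ℝ} (hM : 1 ≤ M) (hε : 0 < ε)
    {u u' φ φ' : ℝ → ℝ} (hu : MemLp u 2 volume) (hu' : MemLp u' 2 volume)
    (hφ : MemLp φ 2 volume) (hφ' : MemLp φ' 2 volume) (huM : ∀ x, u x ^ 2 ≤ M)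
    (hu'M : ∀ x, u' x ^ 2 ≤ M) (hφM : ∀ x, φ x ^ 2 ≤ M) (hφ'M : ∀ x, φ' x ^ 2 ≤ M)
    (hclose : ∫ x, ((u x - φ x) ^ 2 + (u' x - φ' x) ^ 2) ≤ ε ^ 2)
    (huB : ∫ x, (u x ^ 2 + u' x ^ 2) ≤ B) (hφC : ∫ x, (φ x ^ 2 + φ' x ^ 2) ≤ C) (n : ℕ) :
    |(∫ x, energyDensity n (u x) (u' x)) - ∫ x, energyDensity n (φ x) (φ' x)| ≤
      2 ^ (n + 1) * (n + 1) * M ^ (n + 1) * (1 / 2 + B + C) * ε := by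
  set K : ℝ := 2 ^ (n + 1) * (n + 1) * M ^ (n + 1)
  have hdist_int : Integrable fun x => (u x - φ x) ^ 2 + (u' x - φ' x) ^ 2 :=
    (hu.sub hφ).integrable_sq.add (hu'.sub hφ').integrable_sq
  have hnu : Integrable fun x => u x ^ 2 + u' x ^ 2 := hu.integrable_sq.add hu'.integrable_sq
  have hnφ : Integrable fun x => φ x ^ 2 + φ' x ^ 2 := hφ.integrable_sq.add hφ'.integrable_sq
  have hnorms : Integrable fun x => (u x ^ 2 + u' x ^ 2) + (φ x ^ 2 + φ' x ^ 2) := hnu.add hnφ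
  have hpt : ∀ x, |energyDensity n (u x) (u' x) - energyDensity n (φ x) (φ' x)| ≤
      K * (((u x - φ x) ^ 2 + (u' x - φ' x) ^ 2) / (2 * ε) +
        ε * ((u x ^ 2 + u' x ^ 2) + (φ x ^ 2 + φ' x ^ 2))) := fun x => by
    refine (abs_energyDensity_sub_le hM (huM x) (hu'M x) (hφM x) (hφ'M x) n).trans ?_
    refine mul_le_mul_of_nonneg_left ?_ (by positivity)
    have hu_φ := abs_sq_sub_sq_le hε (u x) (φ x)
    have hu'_φ' := abs_sq_sub_sq_le hε (u' x) (φ' x)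
    rw [add_div]
    linarith
  rw [← integral_sub (integrable_energyDensity hM hu hu' huM hu'M n)
    (integrable_energyDensity hM hφ hφ' hφM hφ'M n)]
  calc _ ≤ ∫ x, |energyDensity n (u x) (u' x) - energyDensity n (φ x) (φ' x)| :=
        abs_integral_le_integral_abs
    _ ≤ ∫ x, K * (((u x - φ x) ^ 2 + (u' x - φ' x) ^ 2) / (2 * ε) +
          ε * ((u x ^ 2 + u' x ^ 2) + (φ x ^ 2 + φ' x ^ 2))) :=
        integral_mono_of_nonneg (ae_of_all _ fun x => abs_nonneg _)
          (((hdist_int.div_const _).add (hnorms.const_mul ε)).const_mul K) (ae_of_all _ hpt)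
    _ = K * ((∫ x, ((u x - φ x) ^ 2 + (u' x - φ' x) ^ 2)) / (2 * ε) +
          ε * ((∫ x, (u x ^ 2 + u' x ^ 2)) + ∫ x, (φ x ^ 2 + φ' x ^ 2))) := by
        rw [integral_const_mul, integral_add (hdist_int.div_const _) (hnorms.const_mul ε),
          integral_div, integral_const_mul, integral_add hnu hnφ]
    _ ≤ K * (ε ^ 2 / (2 * ε) + ε * (B + C)) := by gcongr
    _ = K * (1 / 2 + B + C) * ε := by field_simp; ring

@[fun_prop]
theorem Real.measurable_sign : Measurable Real.sign :=
  Measurable.ite measurableSet_Iio measurable_const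
    (Measurable.ite measurableSet_Ioi measurable_const measurable_const)

lemma sq_exp_neg_abs_le_inv_one_add_sq (x : ℝ) : Real.exp (-|x|) ^ 2 ≤ (1 + x ^ 2)⁻¹ := by
  have h : 1 + x ^ 2 ≤ Real.exp |x| ^ 2 := by
    nlinarith [Real.add_one_le_exp |x|, abs_nonneg x, sq_abs x]
  rw [Real.exp_neg, inv_pow]
  exact inv_anti₀ (by positivity) h

lemma memLp_peakon (a : ℝ) : MemLp (fun x => a * Real.exp (-|x|)) 2 volume := by
  refine (memLp_two_iff_integrable_sq (by fun_prop)).2 <|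
    (integrable_inv_one_add_sq.const_mul (a ^ 2)).mono' (by fun_prop) (ae_of_all _ fun x => ?_)
  rw [Real.norm_eq_abs, abs_sq, mul_pow]
  exact mul_le_mul_of_nonneg_left (sq_exp_neg_abs_le_inv_one_add_sq x) (sq_nonneg a)

lemma abs_peakon_deriv_le (a x : ℝ) :
    |-Real.sign x * (a * Real.exp (-|x|))| ≤ |a * Real.exp (-|x|)| := by
  rw [abs_mul, abs_neg]
  refine mul_le_of_le_one_left (abs_nonneg _) ?_
  rcases Real.sign_apply_eq x with h | h | h <;> simp [h]

lemma memLp_peakon_deriv (a : ℝ) :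
    MemLp (fun x => -Real.sign x * (a * Real.exp (-|x|))) 2 volume :=
  (memLp_peakon a).of_le (by fun_prop) (ae_of_all _ (abs_peakon_deriv_le a))

lemma sq_peakon_le (a x : ℝ) : (a * Real.exp (-|x|)) ^ 2 ≤ a ^ 2 := by
  rw [mul_pow]
  refine mul_le_of_le_one_right (sq_nonneg a) ?_
  exact pow_le_one₀ (Real.exp_pos _).le (Real.exp_le_one_iff.2 (neg_nonpos.2 (abs_nonneg x)))

theorem stmt17_general (n : ℕ) (a R : ℝ) :
    ∃ A > (0 : ℝ), ∀ (u u' u'' : ℝ → ℝ) (ε : ℝ),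
      (∀ x, HasDerivAt u (u' x) x) →
      (∀ x, HasDerivAt u' (u'' x) x) →
      MemLp u 2 (volume : Measure ℝ) →
      MemLp u' 2 (volume : Measure ℝ) →
      MemLp u'' 2 (volume : Measure ℝ) →
      (∫ x : ℝ, ((u x) ^ 2 + (u' x) ^ 2 + (u'' x) ^ 2)) ≤ R ^ 2 →
      0 < ε → ε < (3 - 2 * Real.sqrt 2) * a →
      (∫ x : ℝ,
        ((u x - a * Real.exp (-|x|)) ^ 2 +
          (u' x - (-Real.sign x * (a * Real.exp (-|x|)))) ^ 2)) ≤ ε ^ 2 →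
      |(∫ x : ℝ,
          ((u x) ^ (2 * n + 2) +
            (∑ k ∈ Finset.Icc 1 n,
              (-1 : ℝ) ^ (k + 1) / (2 * (k : ℝ) - 1) * ((n + 1).choose k : ℝ) *
                (u x) ^ (2 * n - 2 * k + 2) * (u' x) ^ (2 * k)) +
            (-1 : ℝ) ^ n * (u' x) ^ (2 * n + 2) / (2 * (n : ℝ) + 1))) -
        (∫ x : ℝ,
          ((a * Real.exp (-|x|)) ^ (2 * n + 2) +
            (∑ k ∈ Finset.Icc 1 n,
              (-1 : ℝ) ^ (k + 1) / (2 * (k : ℝ) - 1) * ((n + 1).choose k : ℝ) *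
                (a * Real.exp (-|x|)) ^ (2 * n - 2 * k + 2) *
                (-Real.sign x * (a * Real.exp (-|x|))) ^ (2 * k)) +
            (-1 : ℝ) ^ n * (-Real.sign x * (a * Real.exp (-|x|))) ^ (2 * n + 2) /
              (2 * (n : ℝ) + 1)))| ≤ A * ε := by
  set M : ℝ := max 1 (max (R ^ 2) (a ^ 2))
  set Cφ : ℝ := ∫ x, ((a * Real.exp (-|x|)) ^ 2 + (-Real.sign x * (a * Real.exp (-|x|))) ^ 2)
  have hM : 1 ≤ M := le_max_left _ _
  have hRM : R ^ 2 ≤ M := (le_max_left _ _).trans (le_max_right _ _)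
  have haM : a ^ 2 ≤ M := (le_max_right _ _).trans (le_max_right _ _)
  have hCφ : 0 ≤ Cφ := integral_nonneg fun x => by positivity
  refine ⟨2 ^ (n + 1) * (n + 1) * M ^ (n + 1) * (1 / 2 + R ^ 2 + Cφ), by positivity, ?_⟩
  intro u u' u'' ε hu hu' hu2 hu'2 hu''2 hH2 hε _ hclose
  obtain ⟨huR, hu'R⟩ := sq_le_integral_sq_add_sq_add_sq hu hu' hu2 hu'2 hu''2
  have hH1 : ∫ x, (u x ^ 2 + u' x ^ 2) ≤ R ^ 2 :=
    (integral_sq_add_sq_le_integral hu2 hu'2 hu''2).trans hH2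
  have hφM : ∀ x, (a * Real.exp (-|x|)) ^ 2 ≤ M := fun x => (sq_peakon_le a x).trans haM
  simp_rw [energyDensity_eq]
  exact abs_integral_energyDensity_sub_le hM hε hu2 hu'2 (memLp_peakon a) (memLp_peakon_deriv a)
    (fun x => ((huR x).trans hH2).trans hRM) (fun x => ((hu'R x).trans hH2).trans hRM) hφM
    (fun x => (sq_le_sq.2 (abs_peakon_deriv_le a x)).trans (hφM x)) hclose hH1 le_rfl n

/-- Lemma 3.3, `F`-part. Let `n ≥ 2`, `a > 0`, `R > 0`, and let
`φ_c(x) = a·e^{−|x|}` with weak derivative `φ_c'(x) = −sign(x)·a·e^{−|x|}`. There is a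
constant `A > 0`, depending only on `n`, `a` and `R`, such that for every `u ∈ H²(ℝ)` (with
first and second derivatives `u'`, `u''`) with `‖u‖_{H²} ≤ R` (i.e.
`∫ (u² + u'² + u''²) ≤ R²`) and every `ε` with `0 < ε < (3 − 2√2)·a`: if
`∫_ℝ ((u − φ_c)² + (u' − φ_c')²) dx ≤ ε²`, then `|F(u) − F(φ_c)| ≤ A·ε`. -/
theorem stmt17 (n : ℕ) (hn : 2 ≤ n) (a R : ℝ) (ha : 0 < a) (hR : 0 < R) :
    ∃ A > (0 : ℝ), ∀ (u u' u'' : ℝ → ℝ) (ε : ℝ),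
      (∀ x, HasDerivAt u (u' x) x) →
      (∀ x, HasDerivAt u' (u'' x) x) →
      MemLp u 2 (volume : Measure ℝ) →
      MemLp u' 2 (volume : Measure ℝ) →
      MemLp u'' 2 (volume : Measure ℝ) →
      (∫ x : ℝ, ((u x) ^ 2 + (u' x) ^ 2 + (u'' x) ^ 2)) ≤ R ^ 2 →
      0 < ε → ε < (3 - 2 * Real.sqrt 2) * a →
      (∫ x : ℝ,
        ((u x - a * Real.exp (-|x|)) ^ 2 +
          (u' x - (-Real.sign x * (a * Real.exp (-|x|)))) ^ 2)) ≤ ε ^ 2 →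
      |(∫ x : ℝ,
          ((u x) ^ (2 * n + 2) +
            (∑ k ∈ Finset.Icc 1 n,
              (-1 : ℝ) ^ (k + 1) / (2 * (k : ℝ) - 1) * ((n + 1).choose k : ℝ) *
                (u x) ^ (2 * n - 2 * k + 2) * (u' x) ^ (2 * k)) +
            (-1 : ℝ) ^ n * (u' x) ^ (2 * n + 2) / (2 * (n : ℝ) + 1))) -
        (∫ x : ℝ,
          ((a * Real.exp (-|x|)) ^ (2 * n + 2) +
            (∑ k ∈ Finset.Icc 1 n,
              (-1 : ℝ) ^ (k + 1) / (2 * (k : ℝ) - 1) * ((n + 1).choose k : ℝ) *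
                (a * Real.exp (-|x|)) ^ (2 * n - 2 * k + 2) *
                (-Real.sign x * (a * Real.exp (-|x|))) ^ (2 * k)) +
            (-1 : ℝ) ^ n * (-Real.sign x * (a * Real.exp (-|x|))) ^ (2 * n + 2) /
              (2 * (n : ℝ) + 1)))| ≤ A * ε :=
  stmt17_general n a R
end
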